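/- The number of binary necklaces of length $n$ with an odd number of zeros is at least $2^{n-1}/n$, with equality if and only if $n$ is a power of $2$. -/

import Mathlib

/-- Two binary sequences of length `n` (indexed by `ZMod n`) are related iff one is a
cyclic rotation of the other. -/
def rotSetoid (n : ℕ) : Setoid (ZMod n → Bool) where
  r s t := ∃ k : ZMod n, ∀ i, t i = s (i + k)
  iseqv := by
    constructor
    · intro s; exact ⟨0, fun i => by rw [add_zero]⟩
    · rintro s t ⟨k, h⟩
      exact ⟨-k, fun i => by rw [h (i + -k)]; congr 1; ring⟩
    · rintro s t u ⟨k, h⟩ ⟨k', h'⟩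
      exact ⟨k + k', fun i => by rw [h' i, h (i + k')]; congr 1; ring⟩

/-- The setoid of cyclic rotation restricted to binary sequences of length `n` with an
odd number of zeros. -/
def oddZeroNecklaceSetoid (n : ℕ) [NeZero n] :
    Setoid {s : ZMod n → Bool // Odd (Finset.univ.filter (fun i => s i = false)).card} :=
  Setoid.comap Subtype.val (rotSetoid n)

/-!
Rotation by `ZMod n` acts on the `2 ^ (n - 1)` binary sequences with an odd number of zeros, and
the necklaces in question are its orbits. Every orbit has at most `n` elements, and all of them have
exactly `n` iff the action is free. If a rotation `k` fixes `s`, the zeros of `s` form a union of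
cosets of the stabilizer, so the order of `k` divides the odd number of zeros; conversely, for `k` of
odd order the sequence vanishing exactly on `⟨k⟩` is fixed by `k`. So the action is free iff no
nonzero element of `ZMod n` has odd order, i.e. iff `n` is a power of `2`.
-/

open Finset

namespace AddAction

variable (G : Type*) {X : Type*} [AddGroup G] [AddAction G X]

theorem natCard_orbit_mul_natCard_stabilizer (x : X) :
    Nat.card (orbit G x) * Nat.card (stabilizer G x) = Nat.card G := by
  rw [Nat.card_coe_set_eq, ← index_stabilizer, mul_comm, AddSubgroup.card_mul_index]

variable (X) in
theorem natCard_eq_sum_natCard_orbit [Finite X] [Fintype (orbitRel.Quotient G X)] :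
    Nat.card X = ∑ ω : orbitRel.Quotient G X, Nat.card ω.orbit := by
  rw [Nat.card_congr (selfEquivSigmaOrbits' G X), Nat.card_sigma]

variable [Finite G]

theorem natCard_orbit_le (x : X) : Nat.card (orbit G x) ≤ Nat.card G := by
  rw [← natCard_orbit_mul_natCard_stabilizer G x]
  exact Nat.le_mul_of_pos_right _ Nat.card_pos

theorem natCard_orbit_eq_natCard_iff (x : X) :
    Nat.card (orbit G x) = Nat.card G ↔ stabilizer G x = ⊥ := by
  have h := natCard_orbit_mul_natCard_stabilizer G x
  rw [← AddSubgroup.card_eq_one, ← h, eq_comm,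
    Nat.mul_eq_left (left_ne_zero_of_mul (h ▸ Nat.card_pos.ne'))]

variable (X) [Finite X]

theorem card_le_card_mul_card_quotient :
    Nat.card X ≤ Nat.card G * Nat.card (orbitRel.Quotient G X) := by
  have := Fintype.ofFinite (orbitRel.Quotient G X)
  rw [natCard_eq_sum_natCard_orbit G X, Nat.card_eq_fintype_card (α := orbitRel.Quotient G X),
    mul_comm, ← smul_eq_mul, ← card_univ]
  exact sum_le_card_nsmul _ _ _ fun ω _ => Quotient.inductionOn' ω (natCard_orbit_le G)

theorem card_eq_card_mul_card_quotient_iff :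
    Nat.card X = Nat.card G * Nat.card (orbitRel.Quotient G X) ↔ IsCancelVAdd G X := by
  have := Fintype.ofFinite (orbitRel.Quotient G X)
  rw [natCard_eq_sum_natCard_orbit G X, Nat.card_eq_fintype_card (α := orbitRel.Quotient G X),
    mul_comm, ← smul_eq_mul, ← card_univ, ← sum_const,
    sum_eq_sum_iff_of_le fun ω _ => Quotient.inductionOn' ω (natCard_orbit_le G),
    isCancelVAdd_iff_stabilizer_eq_bot]
  simp only [mem_univ, true_implies]
  exact Quotient.forall.trans (forall_congr' (natCard_orbit_eq_natCard_iff G))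

end AddAction

section CardFilter

variable {G : Type*} [AddGroup G] [Fintype G]

theorem card_filter_add_right (p : G → Prop) [DecidablePred p] (k : G) :
    #{i | p (i + k)} = #{i | p i} :=
  card_nbij' (· + k) (· - k) (fun i hi => by simpa using hi) (fun i hi => by simpa using hi)
    (fun i _ => by simp) (fun i _ => by simp)

theorem AddSubgroup.natCard_dvd_card_filter_eq {α : Type*} [DecidableEq α] (H : AddSubgroup G)
    {s : G → α} (hs : ∀ h ∈ H, ∀ i, s (i + h) = s i) (a : α) :
    Nat.card H ∣ #{i | s i = a} := by
  let s' : G ⧸ H → α := Quotient.lift s fun i j hij => by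
    rw [← hs _ (QuotientAddGroup.leftRel_apply.mp hij) i, add_neg_cancel_left]
  have hcard := Nat.card_congr (QuotientAddGroup.preimageMkEquivAddSubgroupProdSet H {q | s' q = a})
  rw [Nat.card_prod] at hcard
  rw [← Fintype.card_subtype, ← Nat.card_eq_fintype_card]
  exact Dvd.intro _ hcard.symm

end CardFilter

section ParityOfZeros

variable {ι : Type*} [Fintype ι] [DecidableEq ι]

theorem card_filter_update_eq_false (s : ι → Bool) (i₀ : ι) (b : Bool) :
    #{i | Function.update s i₀ b i = false} = (!b).toNat + #{i ∈ univ \ {i₀} | s i = false} := by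
  have hb : (!b).toNat = if b = false then 1 else 0 := by cases b <;> rfl
  simp only [card_filter, hb, ← sum_update_of_mem (mem_univ i₀)]
  exact sum_congr rfl fun i _ =>
    Function.apply_update (fun _ (x : Bool) => if x = false then 1 else 0) s i₀ b i

theorem odd_card_filter_update_not_iff (s : ι → Bool) (i₀ : ι) :
    Odd #{i | Function.update s i₀ (!s i₀) i = false} ↔ ¬Odd #{i | s i = false} := by
  have h := card_filter_update_eq_false s i₀ (s i₀)
  rw [Function.update_eq_self] at h
  rw [Nat.not_odd_iff_even, ← Nat.odd_add', h, card_filter_update_eq_false, add_add_add_comm,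
    ← two_mul]
  cases s i₀ <;> simp

theorem card_filter_odd_card_filter_eq_false [Nonempty ι] :
    #{s : ι → Bool | Odd #{i | s i = false}} = 2 ^ (Fintype.card ι - 1) := by
  obtain ⟨i₀⟩ := ‹Nonempty ι›
  set flip : (ι → Bool) → ι → Bool := fun s => Function.update s i₀ (!s i₀)
  have hflip (s : ι → Bool) : flip (flip s) = s := by simp [flip]
  have hodd_even : #{s : ι → Bool | Odd #{i | s i = false}} =
      #{s : ι → Bool | ¬Odd #{i | s i = false}} :=
    card_nbij' flip flip
      (fun s hs => by
        simp only [coe_filter, mem_univ, true_and, Set.mem_ofPred_eq] at hs ⊢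
        exact fun h => (odd_card_filter_update_not_iff s i₀).mp h hs)
      (fun s hs => by
        simp only [coe_filter, mem_univ, true_and, Set.mem_ofPred_eq] at hs ⊢
        exact (odd_card_filter_update_not_iff s i₀).mpr hs)
      (fun s _ => hflip s) (fun s _ => hflip s)
  have htotal := card_filter_add_card_filter_not (s := (univ : Finset (ι → Bool)))
    (fun s => Odd #{i | s i = false})
  rw [card_univ, Fintype.card_fun, Fintype.card_bool, ← hodd_even,
    ← Nat.two_pow_pred_mul_two Fintype.card_pos] at htotal
  omega

end ParityOfZeros

section OddZeroSeq

variable (G : Type*) [AddGroup G] [Fintype G]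

abbrev OddZeroSeq := {s : G → Bool // Odd (Finset.univ.filter (fun i => s i = false)).card}

instance : AddAction G (OddZeroSeq G) where
  vadd k s := ⟨fun i => s.1 (i + k), by
    rw [card_filter_add_right (fun i => s.1 i = false)]; exact s.2⟩
  zero_vadd s := Subtype.ext (funext fun i => congrArg s.1 (add_zero i))
  add_vadd k k' s := Subtype.ext (funext fun i => congrArg s.1 (add_assoc i k k').symm)

variable {G}

@[simp] theorem OddZeroSeq.vadd_apply (k : G) (s : OddZeroSeq G) (i : G) :
    (k +ᵥ s).1 i = s.1 (i + k) := rfl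

theorem OddZeroSeq.natCard : Nat.card (OddZeroSeq G) = 2 ^ (Nat.card G - 1) := by
  classical
  rw [Nat.card_eq_fintype_card, Fintype.card_subtype, card_filter_odd_card_filter_eq_false,
    Nat.card_eq_fintype_card]

theorem OddZeroSeq.isCancelVAdd_iff :
    IsCancelVAdd G (OddZeroSeq G) ↔ ∀ k : G, Odd (addOrderOf k) → k = 0 := by
  rw [isCancelVAdd_iff_eq_zero_of_vadd_eq]
  constructor
  · intro hfree k hk
    classical
    let H := AddSubgroup.zmultiples k
    refine hfree k ⟨fun i => decide (i ∉ H), ?_⟩ ?_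
    · simp only [decide_eq_false_iff_not, not_not]
      rwa [← Fintype.card_subtype, ← Nat.card_eq_fintype_card, Nat.card_zmultiples]
    · ext i
      simp [AddSubgroup.add_mem_cancel_right H (AddSubgroup.mem_zmultiples k)]
  · intro hodd k s hks
    have hstab : ∀ h ∈ AddAction.stabilizer G s, ∀ i, s.1 (i + h) = s.1 i := fun h hh i =>
      congrFun (congrArg Subtype.val (AddAction.mem_stabilizer_iff.mp hh)) i
    have hH := s.2.of_dvd_nat ((AddAction.stabilizer G s).natCard_dvd_card_filter_eq hstab false)
    exact hodd k (hH.of_dvd_nat (AddSubgroup.addOrderOf_dvd_natCard _ hks))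

end OddZeroSeq

theorem ZMod.forall_odd_addOrderOf_imp_eq_zero_iff (n : ℕ) [NeZero n] :
    (∀ k : ZMod n, Odd (addOrderOf k) → k = 0) ↔ ∃ a, n = 2 ^ a := by
  constructor
  · intro h
    have hq : addOrderOf ((2 ^ n.factorization 2 : ℕ) : ZMod n) = ordCompl[2] n := by
      rw [ZMod.addOrderOf_coe _ (NeZero.ne n), Nat.gcd_eq_right (Nat.ordProj_dvd n 2)]
    have hodd : Odd (ordCompl[2] n) :=
      Nat.odd_iff.mpr (Nat.two_dvd_ne_zero.mp (Nat.not_dvd_ordCompl Nat.prime_two (NeZero.ne n)))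
    rw [← hq] at hodd
    rw [h _ hodd, addOrderOf_zero] at hq
    refine ⟨n.factorization 2, ?_⟩
    nth_rw 1 [← Nat.ordProj_mul_ordCompl_eq_self n 2, ← hq, mul_one]
  · rintro ⟨a, rfl⟩ k hk
    have hdvd : addOrderOf k ∣ 2 ^ a := by
      simpa only [Nat.card_zmod] using addOrderOf_dvd_natCard k
    exact AddMonoid.addOrderOf_eq_one_iff.mp ((hk.coprime_two_right.pow_right a).eq_one_of_dvd hdvd)

theorem oddZeroNecklaceSetoid_eq_orbitRel (n : ℕ) [NeZero n] :
    oddZeroNecklaceSetoid n = AddAction.orbitRel (ZMod n) (OddZeroSeq (ZMod n)) := by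
  ext s t
  rw [AddAction.orbitRel_apply, AddAction.mem_orbit_iff]
  constructor
  · rintro ⟨k, hk⟩
    exact ⟨-k, Subtype.ext (funext fun i => by simp [hk])⟩
  · rintro ⟨k, rfl⟩
    exact ⟨-k, fun i => by simp⟩

theorem card_oddZeroNecklaces_lower_bound (n : ℕ) [NeZero n] :
    (2 ^ (n - 1) : ℚ) / n ≤ (Nat.card (Quotient (oddZeroNecklaceSetoid n)) : ℚ) ∧
    ((Nat.card (Quotient (oddZeroNecklaceSetoid n)) : ℚ) = (2 ^ (n - 1) : ℚ) / n ↔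
      ∃ k : ℕ, n = 2 ^ k) := by
  have hn : (0 : ℚ) < n := Nat.cast_pos.mpr (Nat.pos_of_neZero n)
  have hle := AddAction.card_le_card_mul_card_quotient (ZMod n) (OddZeroSeq (ZMod n))
  have heq := AddAction.card_eq_card_mul_card_quotient_iff (ZMod n) (OddZeroSeq (ZMod n))
  rw [OddZeroSeq.isCancelVAdd_iff, ZMod.forall_odd_addOrderOf_imp_eq_zero_iff] at heq
  rw [OddZeroSeq.natCard, Nat.card_zmod] at hle heq
  rw [oddZeroNecklaceSetoid_eq_orbitRel, div_le_iff₀ hn, eq_div_iff hn.ne', ← heq]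
  constructor
  · rw [mul_comm]
    exact_mod_cast hle
  · rw [eq_comm, mul_comm]
    norm_cast
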